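/- arXiv:2107.13215 — 2 statements merged into one kernel-verified Lean document; each statement's English description precedes it below -/
import Mathlib

section
/- For any prime p and positive integers k and r, any two Galois rings constructed as Z/p^k Z[x]/(f(x)) with f monic of degree r and irreducible modulo p are isomorphic; that is, the isomorphism class of GR(p^k, r) is determined by p, k and r. -/
/-!
Write `A = AdjoinRoot g`, `B = AdjoinRoot f` and `x̄` for reduction modulo `p`. The kernel of
`B → 𝔽_p[x]/(f̄)` is `(p)`, and the target is a field with `p ^ r` elements, so it contains a root
of `ḡ`, which is simple because `ḡ` is separable. As `p` is nilpotent, `B` is `(p)`-adically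
complete, and Hensel's lemma lifts this root to a root of `g` in `B`, giving a ring map `A → B`.
In `A` the ideal `(p)` is maximal and `p ^ k = 0`, so every nonzero element is `p ^ i * u` with
`i < k` and `u` a unit; since `p ^ i ≠ 0` in `B` for `i < k`, the map is injective, hence
bijective because `|A| = |B| = p ^ (k * r)`.
-/

open Polynomial

namespace AdjoinRoot

variable {R S : Type*} [CommRing R] [CommRing S]

theorem _root_.Polynomial.Monic.natCard_adjoinRoot {q : R[X]} (hq : q.Monic) :
    Nat.card (AdjoinRoot q) = Nat.card R ^ q.natDegree := by
  rw [Nat.card_congr (powerBasisAux' hq).equivFun.toEquiv, Nat.card_fun, Nat.card_fin]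

theorem of.injective_of_monic {q : R[X]} (hq : q.Monic) (hd : 0 < q.natDegree) :
    Function.Injective (of q) :=
  (injective_iff_map_eq_zero _).mpr fun c hc => by_contra fun hc0 =>
    mk_ne_zero_of_natDegree_lt hq (C_ne_zero.mpr hc0) (by rwa [natDegree_C]) hc

theorem map_mk (π : R →+* S) (q : R[X]) (q' : S[X]) (h : q' ∣ q.map π) (t : R[X]) :
    map π q q' h (mk q t) = mk q' (t.map π) := by
  rw [map, lift_mk, ← eval₂_map, ← aeval_eq]
  rfl

theorem map_surjective {π : R →+* S} (hπ : Function.Surjective π) (q : R[X]) (q' : S[X])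
    (h : q' ∣ q.map π) : Function.Surjective (map π q q' h) := by
  intro y
  obtain ⟨t', rfl⟩ := mk_surjective y
  obtain ⟨t, rfl⟩ := Polynomial.map_surjective π hπ t'
  exact ⟨mk q t, map_mk π q q' h t⟩

theorem ker_map_eq_map_ker {π : R →+* S} (hπ : Function.Surjective π) (q : R[X]) :
    RingHom.ker (map π q (q.map π) dvd_rfl) = (RingHom.ker π).map (of q) := by
  refine le_antisymm (fun x hx => ?_) (Ideal.map_le_iff_le_comap.mpr fun c hc => by
    rw [Ideal.mem_comap, RingHom.mem_ker, map_of, RingHom.mem_ker.mp hc, map_zero])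
  obtain ⟨t, rfl⟩ := mk_surjective x
  rw [RingHom.mem_ker, map_mk, mk_eq_zero] at hx
  obtain ⟨u', hu'⟩ := hx
  obtain ⟨u, rfl⟩ := Polynomial.map_surjective π hπ u'
  have hmem : t - q * u ∈ (RingHom.ker π).map C := by
    rw [← ker_mapRingHom, RingHom.mem_ker, map_sub, coe_mapRingHom, hu', Polynomial.map_mul,
      sub_self]
  have hmk : mk q t = mk q (t - q * u) := by rw [map_sub, map_mul, mk_self, zero_mul, sub_zero]
  rw [hmk, of, ← Ideal.map_map]
  exact Ideal.mem_map_of_mem _ hmem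

end AdjoinRoot

theorem ZMod.ker_castHom {m n : ℕ} (h : m ∣ n) :
    RingHom.ker (ZMod.castHom h (ZMod m)) = Ideal.span {(m : ZMod n)} := by
  ext x
  obtain ⟨a, rfl⟩ := ZMod.intCast_surjective x
  rw [RingHom.mem_ker, map_intCast, ZMod.intCast_zmod_eq_zero_iff_dvd, Ideal.mem_span_singleton]
  constructor
  · rintro ⟨c, rfl⟩
    exact ⟨c, by push_cast; rfl⟩
  · rintro ⟨c, hc⟩
    rw [← ZMod.intCast_zmod_eq_zero_iff_dvd, ← map_intCast (ZMod.castHom h (ZMod m)), hc, map_mul,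
      map_natCast, ZMod.natCast_self, zero_mul]

section NilpotentMaximal

variable {A : Type*} [CommRing A] {t : A} {k : ℕ}

theorem isUnit_of_notMem_span_of_pow_eq_zero (ht : t ^ k = 0)
    (hmax : (Ideal.span {t}).IsMaximal) {y : A} (hy : y ∉ Ideal.span {t}) : IsUnit y := by
  obtain ⟨z, c, hc, hzc⟩ := hmax.exists_inv hy
  obtain ⟨d, rfl⟩ := Ideal.mem_span_singleton'.mp hc
  have hnil : IsNilpotent (d * t) := (Commute.all _ _).isNilpotent_mul_left ⟨k, ht⟩
  have hzy : IsUnit (z * y) := by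
    rw [eq_sub_of_add_eq hzc]
    exact hnil.isUnit_one_sub
  exact isUnit_of_mul_isUnit_right hzy

theorem exists_eq_pow_mul_unit_of_pow_eq_zero (ht : t ^ k = 0)
    (hmax : (Ideal.span {t}).IsMaximal) {x : A} (hx : x ≠ 0) :
    ∃ i < k, ∃ u : Aˣ, x = t ^ i * u := by
  classical
  have hex : ∃ n, x ∉ Ideal.span {t ^ n} :=
    ⟨k, by rwa [ht, Ideal.mem_span_singleton, zero_dvd_iff]⟩
  obtain ⟨i, hi⟩ : ∃ i, Nat.find hex = i + 1 :=
    Nat.exists_eq_succ_of_ne_zero fun h0 => Nat.find_spec hex (by simp [h0])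
  obtain ⟨y, rfl⟩ : ∃ y, x = t ^ i * y :=
    Ideal.mem_span_singleton.mp (not_not.mp (Nat.find_min hex (by omega)))
  have hy : y ∉ Ideal.span {t} := fun hy => Nat.find_spec hex <| by
    rw [hi, pow_succ]
    exact Ideal.mem_span_singleton.mpr (mul_dvd_mul_left _ (Ideal.mem_span_singleton.mp hy))
  refine ⟨i, ?_, (isUnit_of_notMem_span_of_pow_eq_zero ht hmax hy).unit, rfl⟩
  have := Nat.find_min' hex (m := k) (by rwa [ht, Ideal.mem_span_singleton, zero_dvd_iff])
  omega

theorem RingHom.injective_of_pow_eq_zero {B : Type*} [Semiring B] (ht : t ^ k = 0)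
    (hmax : (Ideal.span {t}).IsMaximal) (Φ : A →+* B) (hΦ : ∀ i < k, Φ t ^ i ≠ 0) :
    Function.Injective Φ := by
  refine (injective_iff_map_eq_zero Φ).mpr fun x hx => by_contra fun hx0 => ?_
  obtain ⟨i, hi, u, rfl⟩ := exists_eq_pow_mul_unit_of_pow_eq_zero ht hmax hx0
  rw [map_mul, map_pow, (u.isUnit.map Φ).mul_left_eq_zero] at hx
  exact hΦ i hi hx

end NilpotentMaximal

theorem IsAdicComplete.of_pow_eq_bot {R : Type*} [CommRing R] {I : Ideal R} {n : ℕ}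
    (h : I ^ n = ⊥) : IsAdicComplete I R := by
  have hsmul_n : (I ^ n • ⊤ : Ideal R) = ⊥ := by rw [smul_eq_mul, Ideal.mul_top, h]
  have : IsHausdorff I R := ⟨fun x hx => by
    have hxn := hx n
    rwa [SModEq.zero, hsmul_n, Submodule.mem_bot] at hxn⟩
  have : IsPrecomplete I R := ⟨fun {f} hf => ⟨f n, fun m => by
    rcases le_total m n with hmn | hnm
    · exact hf hmn
    · have hfnm := hf hnm
      rw [hsmul_n, SModEq.bot] at hfnm
      rw [hfnm]⟩⟩
  constructor

theorem HenselianRing.exists_isRoot_of_eval₂_derivative_ne_zero {B K : Type*} [CommRing B]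
    [Field K] {ρ : B →+* K} (hρ : Function.Surjective ρ) [HenselianRing B (RingHom.ker ρ)]
    {g : B[X]} (hg : g.Monic) {b : K} (hb : g.eval₂ ρ b = 0) (hb' : g.derivative.eval₂ ρ b ≠ 0) :
    ∃ a, g.IsRoot a := by
  obtain ⟨a₀, rfl⟩ := hρ b
  have hunit : IsUnit (Ideal.Quotient.mk (RingHom.ker ρ) (g.derivative.eval a₀)) := by
    rw [← isUnit_map_iff (RingHom.quotientKerEquivOfSurjective hρ),
      RingHom.quotientKerEquivOfSurjective_apply_mk, ← eval₂_hom]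
    exact hb'.isUnit
  obtain ⟨a, ha, -⟩ := HenselianRing.is_henselian g hg a₀
    (by rw [RingHom.mem_ker, ← eval₂_hom, hb]) hunit
  exact ⟨a, ha⟩

theorem FiniteField.exists_aeval_eq_zero_of_natDegree_dvd_finrank {F L : Type*} [Field F]
    [Field L] [Algebra F L] [Finite L] {h : F[X]} (hh : Irreducible h)
    (hd : h.natDegree ∣ Module.finrank F L) : ∃ x : L, aeval x h = 0 := by
  have := Fact.mk hh
  obtain ⟨φ⟩ := FiniteField.nonempty_algHom_of_finrank_dvd (K := AdjoinRoot h) (L := L)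
    (by rwa [(AdjoinRoot.powerBasis hh.ne_zero).finrank, AdjoinRoot.powerBasis_dim])
  exact ⟨φ (AdjoinRoot.root h), by rw [aeval_algHom_apply, AdjoinRoot.aeval_eq,
    AdjoinRoot.mk_self, map_zero]⟩

namespace GaloisRing

variable {p k : ℕ}

noncomputable abbrev residue (hk : k ≠ 0) (q : (ZMod (p ^ k))[X]) :
    AdjoinRoot q →+* AdjoinRoot (q.map (ZMod.castHom (dvd_pow_self p hk) (ZMod p))) :=
  AdjoinRoot.map _ q _ dvd_rfl

theorem natCast_pow_eq_zero (q : (ZMod (p ^ k))[X]) : (p : AdjoinRoot q) ^ k = 0 := by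
  rw [← Nat.cast_pow, ← map_natCast (AdjoinRoot.of q), ZMod.natCast_self, map_zero]

theorem ker_residue (hk : k ≠ 0) (q : (ZMod (p ^ k))[X]) :
    RingHom.ker (residue hk q) = Ideal.span {(p : AdjoinRoot q)} := by
  rw [AdjoinRoot.ker_map_eq_map_ker (ZMod.ringHom_surjective _), ZMod.ker_castHom, Ideal.map_span,
    Set.image_singleton, map_natCast]

theorem isMaximal_span_natCast [Fact p.Prime] (hk : k ≠ 0) {q : (ZMod (p ^ k))[X]}
    (hq : Irreducible (q.map (ZMod.castHom (dvd_pow_self p hk) (ZMod p)))) :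
    (Ideal.span {(p : AdjoinRoot q)}).IsMaximal := by
  have := Fact.mk hq
  rw [← ker_residue hk]
  exact RingHom.ker_isMaximal_of_surjective _
    (AdjoinRoot.map_surjective (ZMod.ringHom_surjective _) _ _ _)

theorem exists_eval₂_eq_zero [Fact p.Prime] (hk : k ≠ 0) {f g : (ZMod (p ^ k))[X]}
    (hfm : f.Monic) (hgm : g.Monic) (hd : f.natDegree = g.natDegree)
    (hfi : Irreducible (f.map (ZMod.castHom (dvd_pow_self p hk) (ZMod p))))
    (hgi : Irreducible (g.map (ZMod.castHom (dvd_pow_self p hk) (ZMod p)))) :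
    ∃ a : AdjoinRoot f, g.eval₂ (AdjoinRoot.of f) a = 0 := by
  set π := ZMod.castHom (dvd_pow_self p hk) (ZMod p)
  have := Fact.mk hfi
  have : IsAdicComplete (RingHom.ker (residue hk f)) (AdjoinRoot f) :=
    IsAdicComplete.of_pow_eq_bot (n := k) (by
      rw [ker_residue, Ideal.span_singleton_pow, natCast_pow_eq_zero, Ideal.span_singleton_eq_bot])
  have : Module.Finite (ZMod p) (AdjoinRoot (f.map π)) := (hfm.map π).finite_adjoinRoot
  have : Finite (AdjoinRoot (f.map π)) := Module.finite_of_finite (ZMod p)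
  obtain ⟨b, hb⟩ := FiniteField.exists_aeval_eq_zero_of_natDegree_dvd_finrank
    (L := AdjoinRoot (f.map π)) hgi (by
      rw [(AdjoinRoot.powerBasis (hfm.map π).ne_zero).finrank, AdjoinRoot.powerBasis_dim,
        hfm.natDegree_map, hgm.natDegree_map, hd])
  have hcomp : (residue hk f).comp (AdjoinRoot.of f) = (AdjoinRoot.of (f.map π)).comp π :=
    RingHom.ext_zmod _ _
  have hb' := (PerfectField.separable_of_irreducible hgi).aeval_derivative_ne_zero hb
  obtain ⟨a, ha⟩ := HenselianRing.exists_isRoot_of_eval₂_derivative_ne_zero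
    (AdjoinRoot.map_surjective (ZMod.ringHom_surjective π) _ _ _) (hgm.map (AdjoinRoot.of f))
    (b := b) (by rwa [eval₂_map, hcomp, ← eval₂_map])
    (by rwa [derivative_map, eval₂_map, hcomp, ← eval₂_map, ← derivative_map])
  exact ⟨a, by rwa [← eval_map]⟩

theorem ringHom_injective [Fact p.Prime] (hk : k ≠ 0) {f g : (ZMod (p ^ k))[X]}
    (hgi : Irreducible (g.map (ZMod.castHom (dvd_pow_self p hk) (ZMod p))))
    (hfm : f.Monic) (hf : 0 < f.natDegree) (Φ : AdjoinRoot g →+* AdjoinRoot f) :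
    Function.Injective Φ := by
  refine Φ.injective_of_pow_eq_zero (natCast_pow_eq_zero g) (isMaximal_span_natCast hk hgi)
    fun i hi hpi => ?_
  rw [map_natCast, ← Nat.cast_pow, ← map_natCast (AdjoinRoot.of f),
    ← map_zero (AdjoinRoot.of f)] at hpi
  have := (ZMod.natCast_eq_zero_iff _ _).mp (AdjoinRoot.of.injective_of_monic hfm hf hpi)
  exact absurd ((Nat.pow_dvd_pow_iff_le_right (Fact.out : p.Prime).one_lt).mp this) (by omega)

end GaloisRing

/-- Any two Galois rings `ℤ/p^kℤ[x]/(f)` with `f` monic of degree `r` and irreducible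
modulo `p` are isomorphic: the isomorphism class of `GR(p^k, r)` depends only on `p, k, r`. -/
theorem stmt_8 (p k r : ℕ) (hp : p.Prime) (hk : 0 < k) (hr : 0 < r)
    (f g : Polynomial (ZMod (p ^ k)))
    (hfm : f.Monic) (hgm : g.Monic) (hfd : f.natDegree = r) (hgd : g.natDegree = r)
    (hfi : Irreducible (f.map (ZMod.castHom (dvd_pow_self p hk.ne') (ZMod p))))
    (hgi : Irreducible (g.map (ZMod.castHom (dvd_pow_self p hk.ne') (ZMod p)))) :
    Nonempty ((Polynomial (ZMod (p ^ k)) ⧸ Ideal.span {f})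
      ≃+* (Polynomial (ZMod (p ^ k)) ⧸ Ideal.span {g})) := by
  have := Fact.mk hp
  obtain ⟨a, ha⟩ := GaloisRing.exists_eval₂_eq_zero hk.ne' hfm hgm (hfd.trans hgd.symm) hfi hgi
  let Φ : AdjoinRoot g →+* AdjoinRoot f := AdjoinRoot.lift (AdjoinRoot.of f) a ha
  have hcard : Nat.card (AdjoinRoot g) = Nat.card (AdjoinRoot f) := by
    rw [hfm.natCard_adjoinRoot, hgm.natCard_adjoinRoot, hfd, hgd]
  have : Finite (AdjoinRoot f) := Nat.finite_of_card_ne_zero <| by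
    rw [hfm.natCard_adjoinRoot, Nat.card_zmod]
    exact pow_ne_zero _ (pow_ne_zero _ hp.ne_zero)
  have hbij : Function.Bijective Φ := (Nat.bijective_iff_injective_and_card Φ).mpr
    ⟨GaloisRing.ringHom_injective hk.ne' hgi hfm (hfd ▸ hr) Φ, hcard⟩
  exact ⟨(RingEquiv.ofBijective Φ hbij).symm⟩
end

section
/- Up to isomorphism there are exactly 4 two-dimensional F₂-algebras A (associative, not necessarily commutative or unital) whose Jacobson radical N is one-dimensional with N² = 0 and with A/N ≅ F₂. They are distinguished by an idempotent e and nilpotent x with e² = e, x² = 0, and the four possibilities (i) ex = xe = x, (ii) ex = xe = 0, (iii) ex = x, xe = 0, (iv) ex = 0, xe = x; each of these four structures is associative and no two are isomorphic. -/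
/-- The Jacobson radical of a not-necessarily-unital ring `R`, defined as the set of
elements of `R` lying in the Jacobson radical of the unitization `ℤ ⊕ R`. -/
def jacobsonSet (R : Type*) [NonUnitalRing R] : Set R :=
  {x | (x : Unitization ℤ R) ∈ (⊥ : Ideal (Unitization ℤ R)).jacobson}

/-- The multiplication on the two-dimensional `𝔽₂`-space with basis `e = (1,0)`,
`x = (0,1)` determined bilinearly by `e² = e`, `x² = 0`, `e·x = α x`, `x·e = β x`,
where `α, β ∈ 𝔽₂`.  The four parameter choices `(α,β) = (1,1), (0,0), (1,0), (0,1)`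
give the four multiplications (i)–(iv). -/
def mul17 (α β : ZMod 2) (v w : ZMod 2 × ZMod 2) : ZMod 2 × ZMod 2 :=
  (v.1 * w.1, α * v.1 * w.2 + β * v.2 * w.1)

/-!
Since `A` has exponent `2` it is an `𝔽₂`-vector space, and the radical is a line `N = {0, x}`
with `x² = 0`. If `a² - a = n ∈ N`, then `n² = 0` and `e = a + n - 2an` is an idempotent
congruent to `a` modulo `N`, so `e ∉ N` and `e, x` is a basis of `A`. As `N` is a two-sided
ideal, `ex = αx` and `xe = βx` for some `α, β ∈ 𝔽₂`, and in the coordinates of this basis the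
product of `A` is `mul17 α β`. Associativity of the four models and their pairwise
non-isomorphism are finite checks.
-/

section JacobsonSet

variable {R : Type*} [NonUnitalRing R]

theorem zero_mem_jacobsonSet : (0 : R) ∈ jacobsonSet R := by
  simp [jacobsonSet]

theorem sub_mem_jacobsonSet {a b : R} (ha : a ∈ jacobsonSet R) (hb : b ∈ jacobsonSet R) :
    a - b ∈ jacobsonSet R := by
  simpa [jacobsonSet] using Ideal.sub_mem _ ha hb

theorem nsmul_mem_jacobsonSet {a : R} (k : ℕ) (ha : a ∈ jacobsonSet R) :
    k • a ∈ jacobsonSet R := by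
  simpa [jacobsonSet] using nsmul_mem (show (a : Unitization ℤ R) ∈ _ from ha) k

theorem mul_mem_jacobsonSet_left (a : R) {b : R} (hb : b ∈ jacobsonSet R) :
    a * b ∈ jacobsonSet R := by
  simpa [jacobsonSet] using Ideal.mul_mem_left _ (a : Unitization ℤ R) hb

theorem mul_mem_jacobsonSet_right {a : R} (b : R) (ha : a ∈ jacobsonSet R) :
    a * b ∈ jacobsonSet R := by
  simpa [jacobsonSet] using Ideal.mul_mem_right (b : Unitization ℤ R) _ ha

end JacobsonSet

theorem isIdempotentElem_add_sub_two_nsmul_mul {R : Type*} [NonUnitalRing R] {a n : R}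
    (ha : a * a = a + n) (hn : n * n = 0) : IsIdempotentElem (a + n - 2 • (a * n)) := by
  have hcomm : n * a = a * n := by
    have := mul_assoc a a a
    rw [ha, add_mul, mul_add] at this
    exact add_left_cancel this
  have h1 : a * (a * n) = a * n := by rw [← mul_assoc, ha, add_mul, hn, add_zero]
  have h2 : n * (a * n) = 0 := by rw [← mul_assoc, hcomm, mul_assoc, hn, mul_zero]
  have h3 : a * n * a = a * n := by rw [mul_assoc, hcomm, h1]
  have h4 : a * n * n = 0 := by rw [mul_assoc, hn, mul_zero]
  have h5 : a * n * (a * n) = 0 := by rw [← mul_assoc, h3, h4]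
  simp only [IsIdempotentElem, mul_add, add_mul, mul_sub, sub_mul, smul_mul_assoc, mul_smul_comm,
    ha, hn, hcomm, h1, h2, h3, h4, h5, smul_zero]
  abel

theorem exists_isIdempotentElem_notMem_jacobsonSet {R : Type*} [NonUnitalRing R]
    (hsq : ∀ x y : R, x ∈ jacobsonSet R → y ∈ jacobsonSet R → x * y = 0) {a : R}
    (ha : a ∉ jacobsonSet R) (haa : a * a - a ∈ jacobsonSet R) :
    ∃ e : R, IsIdempotentElem e ∧ e ∉ jacobsonSet R := by
  set n := a * a - a
  refine ⟨a + n - 2 • (a * n),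
    isIdempotentElem_add_sub_two_nsmul_mul (by rw [add_sub_cancel]) (hsq n n haa haa), ?_⟩
  intro he
  have hdiff : n - 2 • (a * n) ∈ jacobsonSet R :=
    sub_mem_jacobsonSet haa (nsmul_mem_jacobsonSet 2 (mul_mem_jacobsonSet_left a haa))
  exact ha (by simpa [add_sub_assoc] using sub_mem_jacobsonSet he hdiff)

theorem Set.exists_ne_eq_pair_of_ncard_eq_two {α : Type*} {s : Set α} {a : α}
    (hs : s.ncard = 2) (ha : a ∈ s) : ∃ b, b ≠ a ∧ s = {a, b} := by
  obtain ⟨p, q, hpq, rfl⟩ := Set.ncard_eq_two.mp hs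
  rcases ha with rfl | rfl
  · exact ⟨q, hpq.symm, rfl⟩
  · exact ⟨p, hpq, Set.pair_comm _ _⟩

instance ZMod.isScalarTower_self {n : ℕ} {A : Type*} [NonUnitalRing A] [Module (ZMod n) A] :
    IsScalarTower (ZMod n) A A where
  smul_assoc c a b := by
    obtain ⟨k, rfl⟩ := ZMod.intCast_surjective c
    simp only [Int.cast_smul_eq_zsmul, smul_eq_mul, smul_mul_assoc]

instance ZMod.smulCommClass_self {n : ℕ} {A : Type*} [NonUnitalRing A] [Module (ZMod n) A] :
    SMulCommClass (ZMod n) A A where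
  smul_comm c a b := by
    obtain ⟨k, rfl⟩ := ZMod.intCast_surjective c
    simp only [Int.cast_smul_eq_zsmul, smul_eq_mul, mul_smul_comm]

section PairMap

variable {A : Type*} [NonUnitalRing A] [Module (ZMod 2) A]

def pairMap (e x : A) : ZMod 2 × ZMod 2 →ₗ[ZMod 2] A :=
  (LinearMap.toSpanSingleton _ _ e).coprod (LinearMap.toSpanSingleton _ _ x)

theorem pairMap_apply (e x : A) (u : ZMod 2 × ZMod 2) : pairMap e x u = u.1 • e + u.2 • x := rfl

theorem pairMap_mul17 {e x : A} {α β : ZMod 2} (he : IsIdempotentElem e) (hx : x * x = 0)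
    (hex : e * x = α • x) (hxe : x * e = β • x) (u v : ZMod 2 × ZMod 2) :
    pairMap e x (mul17 α β u v) = pairMap e x u * pairMap e x v := by
  simp only [pairMap_apply, mul17, add_mul, mul_add, smul_mul_assoc, mul_smul_comm, he.eq, hx, hex,
    hxe, smul_zero]
  module

theorem pairMap_injective {e x : A} (hx : x ≠ 0) (he : ∀ c : ZMod 2, c • x ≠ e) :
    Function.Injective (pairMap e x) := by
  have hind := LinearIndependent.pair_iff.mp ((LinearIndependent.pair_iff' hx).mpr he)
  refine (injective_iff_map_eq_zero _).mpr fun u hu => ?_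
  obtain ⟨h2, h1⟩ := hind u.2 u.1 (by rw [add_comm]; exact hu)
  exact Prod.ext h1 h2

theorem exists_equiv_mul17 [Fintype A] (hcard : Fintype.card A = 4) {e x : A} {α β : ZMod 2}
    (he : IsIdempotentElem e) (hx : x * x = 0) (hx0 : x ≠ 0) (hindep : ∀ c : ZMod 2, c • x ≠ e)
    (hex : e * x = α • x) (hxe : x * e = β • x) :
    ∃ φ : A ≃ (ZMod 2 × ZMod 2), (∀ a b : A, φ (a + b) = φ a + φ b) ∧
      (∀ a b : A, φ (a * b) = mul17 α β (φ a) (φ b)) := by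
  have hbij : Function.Bijective (pairMap e x) :=
    (Fintype.bijective_iff_injective_and_card _).mpr
      ⟨pairMap_injective hx0 hindep, by simp [hcard]⟩
  let ψ := LinearEquiv.ofBijective (pairMap e x) hbij
  refine ⟨ψ.symm.toEquiv, fun a b => map_add ψ.symm a b, fun a b => ψ.injective ?_⟩
  have hψ : ∀ y, pairMap e x (ψ.symm y) = y := ψ.apply_symm_apply
  change pairMap e x (ψ.symm (a * b)) = pairMap e x (mul17 α β (ψ.symm a) (ψ.symm b))
  rw [pairMap_mul17 he hx hex hxe, hψ, hψ, hψ]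

end PairMap

/-- Up to isomorphism there are exactly 4 two-dimensional `𝔽₂`-algebras `A` (associative,
not necessarily unital or commutative) whose Jacobson radical `N` is one-dimensional with
`N² = 0` and `A/N ≅ 𝔽₂`: the four structures `mul17 α β` with basis `{e, x}`, `e² = e`,
`x² = 0` and `(ex, xe) = (αx, βx)`.  Each of the four is associative, no two are
isomorphic, and every such algebra `A` is isomorphic to one of them. -/
theorem stmt_17 :
    (∀ α β : ZMod 2, ∀ x y z : ZMod 2 × ZMod 2,
      mul17 α β (mul17 α β x y) z = mul17 α β x (mul17 α β y z)) ∧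
    (∀ α β α' β' : ZMod 2, (α, β) ≠ (α', β') →
      ¬ ∃ φ : (ZMod 2 × ZMod 2) ≃ (ZMod 2 × ZMod 2),
        (∀ a b, φ (a + b) = φ a + φ b) ∧
        (∀ a b, φ (mul17 α β a b) = mul17 α' β' (φ a) (φ b))) ∧
    (∀ (A : Type) (_ : NonUnitalRing A) (_ : Fintype A),
      Fintype.card A = 4 → (∀ a : A, a + a = 0) →
      Nat.card (jacobsonSet A) = 2 →
      (∀ x y : A, x ∈ jacobsonSet A → y ∈ jacobsonSet A → x * y = 0) →
      (∃ a : A, a ∉ jacobsonSet A ∧ a * a - a ∈ jacobsonSet A) →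
      ∃ (α β : ZMod 2) (φ : A ≃ (ZMod 2 × ZMod 2)),
        (∀ a b : A, φ (a + b) = φ a + φ b) ∧
        (∀ a b : A, φ (a * b) = mul17 α β (φ a) (φ b))) := by
  refine ⟨by decide, by decide, fun A _ _ hcard hchar hN hsq ⟨a, ha, haa⟩ => ?_⟩
  let _ : Module (ZMod 2) A := AddCommGroup.zmodModule fun y => (two_nsmul y).trans (hchar y)
  obtain ⟨x, hx0, hNx⟩ := Set.exists_ne_eq_pair_of_ncard_eq_two
    (by rwa [← Nat.card_coe_set_eq]) (zero_mem_jacobsonSet (R := A))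
  have hmem : ∀ y, y ∈ jacobsonSet A ↔ y = 0 ∨ y = x := by simp [hNx]
  have hxN : x ∈ jacobsonSet A := (hmem x).mpr (Or.inr rfl)
  have hsmul : ∀ y ∈ jacobsonSet A, ∃ c : ZMod 2, y = c • x := fun y hy => by
    rcases (hmem y).mp hy with rfl | rfl
    exacts [⟨0, (zero_smul _ _).symm⟩, ⟨1, (one_smul _ _).symm⟩]
  obtain ⟨e, he, heN⟩ := exists_isIdempotentElem_notMem_jacobsonSet hsq ha haa
  obtain ⟨α, hex⟩ := hsmul _ (mul_mem_jacobsonSet_left e hxN)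
  obtain ⟨β, hxe⟩ := hsmul _ (mul_mem_jacobsonSet_right e hxN)
  have hindep : ∀ c : ZMod 2, c • x ≠ e := by
    intro c hc
    apply heN
    rw [← hc, hmem]
    rcases (by decide : ∀ c : ZMod 2, c = 0 ∨ c = 1) c with rfl | rfl <;> simp
  exact ⟨α, β, exists_equiv_mul17 hcard he (hsq x x hxN hxN) hx0 hindep hex hxe⟩
end
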